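/- arXiv:1103.0996 — 2 statements merged into one kernel-verified Lean document; each statement's English description precedes it below -/
import Mathlib

section
/- Independence lemma: Let 𝒜 be a finite set, 𝒜′ ⊂ 𝒜 a nonempty subset, and p_A a pmf on 𝒜. Let the random vector Aⁿ = (A₁,…,Aₙ) be distributed proportionally to the product distribution ∏ₗ p_A(aₗ) restricted to the support set {aⁿ : a_k ∈ 𝒜′ for some k}. Given Aⁿ, let I be drawn uniformly from the set {i : A_i ∈ 𝒜′}, and let J = ((I+s−1) mod n) + 1 for a fixed integer s with 1 ≤ s ≤ n−1. Then the random variables A_I and A_J are independent. -/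
open Finset Real

noncomputable section

variable {Ω : Type*} [Fintype Ω]

/-- `μ` is a probability mass function on the finite sample space `Ω`. -/
def IsPMF (μ : Ω → ℝ) : Prop := (∀ ω, 0 ≤ μ ω) ∧ ∑ ω, μ ω = 1

/-- Probability that the random variable `X` takes the value `a`. -/
def pr {α : Type*} [DecidableEq α] (μ : Ω → ℝ) (X : Ω → α) (a : α) : ℝ :=
  ∑ ω, if X ω = a then μ ω else 0

/-- Shannon entropy (in bits). -/
def ent {α : Type*} [Fintype α] [DecidableEq α] (μ : Ω → ℝ) (X : Ω → α) : ℝ :=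
  -∑ a, pr μ X a * Real.logb 2 (pr μ X a)

/-- Conditional entropy `H(X|Y)`. -/
def condEnt {α β : Type*} [Fintype α] [DecidableEq α] [Fintype β] [DecidableEq β]
    (μ : Ω → ℝ) (X : Ω → α) (Y : Ω → β) : ℝ :=
  ent μ (fun ω => (X ω, Y ω)) - ent μ Y

/-- Mutual information `I(X;Y)`. -/
def mutInf {α β : Type*} [Fintype α] [DecidableEq α] [Fintype β] [DecidableEq β]
    (μ : Ω → ℝ) (X : Ω → α) (Y : Ω → β) : ℝ :=
  ent μ X + ent μ Y - ent μ (fun ω => (X ω, Y ω))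

/-- Conditional mutual information `I(X;Y|Z)`. -/
def condMutInf {α β γ : Type*} [Fintype α] [DecidableEq α] [Fintype β] [DecidableEq β]
    [Fintype γ] [DecidableEq γ] (μ : Ω → ℝ) (X : Ω → α) (Y : Ω → β) (Z : Ω → γ) : ℝ :=
  condEnt μ X Z + condEnt μ Y Z - condEnt μ (fun ω => (X ω, Y ω)) Z


/-! The law of `(Aⁿ, I)` is invariant under relabelling the coordinates of `Aⁿ` together with `I`.
Rotating by `I` and then swapping positions `1` and `s` shows that `P(A_I = y, A_J = z)` is `n`
times the mass of `{A₀ = y, A₁ = z, I = 0}`. Splitting off the first two coordinates, this mass is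
`[y ∈ 𝒜′] p_A(y) · p_A(z) · D(z)`: the remaining `n - 2` coordinates see `y` only through
`y ∈ 𝒜′`, which holds on that event. A joint law of the product form `f(y) g(z)` is the product of
its marginals. -/

section Marginals

variable {α β : Type*} [DecidableEq α] [DecidableEq β] (μ : Ω → ℝ) (X : Ω → α) (Y : Ω → β)

lemma sum_pr [Fintype α] : ∑ a, pr μ X a = ∑ ω, μ ω := by
  unfold pr
  rw [sum_comm]
  simp

lemma sum_pr_pair_right [Fintype β] (y : α) :
    ∑ z, pr μ (fun ω => (X ω, Y ω)) (y, z) = pr μ X y := by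
  unfold pr
  rw [sum_comm]
  refine sum_congr rfl fun ω _ => ?_
  by_cases h : X ω = y <;> simp [h, Prod.ext_iff]

lemma sum_pr_pair_left [Fintype α] (z : β) :
    ∑ y, pr μ (fun ω => (X ω, Y ω)) (y, z) = pr μ Y z := by
  unfold pr
  rw [sum_comm]
  refine sum_congr rfl fun ω _ => ?_
  by_cases h : Y ω = z <;> simp [h, Prod.ext_iff]

theorem pr_pair_eq_mul_of_eq_mul [Fintype α] [Fintype β] (hμ : ∑ ω, μ ω = 1)
    (f : α → ℝ) (g : β → ℝ) (hfg : ∀ y z, pr μ (fun ω => (X ω, Y ω)) (y, z) = f y * g z)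
    (y : α) (z : β) :
    pr μ (fun ω => (X ω, Y ω)) (y, z) = pr μ X y * pr μ Y z := by
  have hX : pr μ X y = f y * ∑ z, g z := by
    rw [← sum_pr_pair_right μ X Y, mul_sum]
    exact sum_congr rfl fun z _ => hfg y z
  have hY : pr μ Y z = (∑ y, f y) * g z := by
    rw [← sum_pr_pair_left μ X Y, sum_mul]
    exact sum_congr rfl fun y _ => hfg y z
  have hfg1 : (∑ y, f y) * ∑ z, g z = 1 := by
    rw [← hμ, ← sum_pr μ (fun ω => (X ω, Y ω)), Fintype.sum_prod_type, sum_mul]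
    refine sum_congr rfl fun y _ => ?_
    rw [mul_sum]
    exact sum_congr rfl fun z _ => (hfg y z).symm
  rw [hfg, hX, hY]
  linear_combination (-(f y * g z)) * hfg1

end Marginals

section HitLaw

variable {α ι κ : Type*} [DecidableEq α] [Fintype ι] [Fintype κ]
  (pA : α → ℝ) (A' : Finset α) (c : ℝ)

def hitCount (a : ι → α) : ℕ := #{k | a k ∈ A'}

def hitWeight (a : ι → α) : ℝ := (∏ l, pA (a l)) / (c * hitCount A' a)

/-- The joint law of `(Aⁿ, I)`. -/
def hitLaw (p : (ι → α) × ι) : ℝ := if p.1 p.2 ∈ A' then hitWeight pA A' c p.1 else 0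

/-- For `y ∈ 𝒜′`, this is the probability of `A_i = y, A_j = z, I = i` under `hitLaw`. -/
def pairMass [Fintype α] [DecidableEq ι] (i j : ι) (y z : α) : ℝ :=
  ∑ a : ι → α, if a i = y ∧ a j = z then hitWeight pA A' c a else 0

lemma hitCount_comp_equiv (σ : κ ≃ ι) (a : ι → α) : hitCount A' (a ∘ σ) = hitCount A' a := by
  simp only [hitCount, card_filter]
  exact σ.sum_comp fun k => if a k ∈ A' then 1 else 0

lemma hitWeight_comp_equiv (σ : κ ≃ ι) (a : ι → α) :
    hitWeight pA A' c (a ∘ σ) = hitWeight pA A' c a := by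
  rw [hitWeight, hitWeight, hitCount_comp_equiv, Function.comp_def,
    σ.prod_comp fun l => pA (a l)]

lemma hitCount_cons {m : ℕ} (x : α) (b : Fin m → α) :
    hitCount A' (Fin.cons x b : Fin (m + 1) → α) = (if x ∈ A' then 1 else 0) + hitCount A' b := by
  simp only [hitCount, card_filter, Fin.sum_univ_succ, Fin.cons_zero, Fin.cons_succ]

lemma sum_hitLaw_fiber (a : ι → α) :
    ∑ i, hitLaw pA A' c (a, i) = if ∃ k, a k ∈ A' then (∏ l, pA (a l)) / c else 0 := by
  simp only [hitLaw]
  rw [← sum_filter, sum_const, nsmul_eq_mul]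
  change (hitCount A' a : ℝ) * hitWeight pA A' c a = _
  split_ifs with ha
  · have hpos : (hitCount A' a : ℝ) ≠ 0 := by
      obtain ⟨k, hk⟩ := ha
      exact Nat.cast_ne_zero.mpr (card_ne_zero.mpr ⟨k, by simpa using hk⟩)
    rw [hitWeight]
    field_simp
  · have hzero : hitCount A' a = 0 := by
      simpa [hitCount, filter_eq_empty_iff] using ha
    simp [hzero]

lemma sum_hitLaw [Fintype α] [DecidableEq ι] :
    ∑ p : (ι → α) × ι, hitLaw pA A' c p
      = (∑ a : ι → α with ∃ k, a k ∈ A', ∏ l, pA (a l)) / c := by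
  rw [Fintype.sum_prod_type]
  simp only [sum_hitLaw_fiber, sum_filter, sum_div, ite_div, zero_div]

lemma pr_hitLaw_pair [Fintype α] [DecidableEq ι] (J : ι → ι) (y z : α) :
    pr (hitLaw pA A' c) (fun p => (p.1 p.2, p.1 (J p.2))) (y, z)
      = if y ∈ A' then ∑ i, pairMass pA A' c i (J i) y z else 0 := by
  unfold pr pairMass hitLaw
  rw [Fintype.sum_prod_type_right]
  split_ifs with hy
  · refine sum_congr rfl fun i _ => sum_congr rfl fun a _ => ?_
    by_cases ha : a i = y <;> simp [ha, hy]
  · refine sum_eq_zero fun i _ => sum_eq_zero fun a _ => ?_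
    by_cases ha : a i = y <;> simp [ha, hy]

lemma pairMass_perm [Fintype α] [DecidableEq ι] (σ : Equiv.Perm ι) (i j : ι) (y z : α) :
    pairMass pA A' c (σ i) (σ j) y z = pairMass pA A' c i j y z := by
  refine Fintype.sum_equiv (σ.symm.arrowCongr (Equiv.refl α)) _ _ fun a => ?_
  change _ = ite _ (hitWeight pA A' c (a ∘ σ)) 0
  rw [hitWeight_comp_equiv]
  rfl

end HitLaw

lemma sum_fin_cons {α M : Type*} [Fintype α] [AddCommMonoid M] {m : ℕ}
    (F : (Fin (m + 1) → α) → M) :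
    ∑ a, F a = ∑ x, ∑ b, F (Fin.cons x b) := by
  rw [← (Fin.consEquiv fun _ => α).sum_comp, Fintype.sum_prod_type]
  rfl

section Cyclic

variable {α : Type*} [Fintype α] [DecidableEq α] (pA : α → ℝ) (A' : Finset α) (c : ℝ) {m : ℕ}

lemma pairMass_zero_one (y z : α) :
    pairMass pA A' c (0 : Fin (m + 2)) 1 y z = pA y * pA z * ∑ b : Fin m → α,
      (∏ l, pA (b l)) /
        (c * ((if y ∈ A' then 1 else 0) + (if z ∈ A' then 1 else 0) + hitCount A' b : ℕ)) := by
  simp only [pairMass, sum_fin_cons]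
  simp [hitWeight, hitCount_cons, Fin.prod_univ_succ, ite_and, mul_sum, mul_div_assoc, mul_assoc,
    add_assoc]

lemma pairMass_add_eq_zero_one {s : Fin (m + 2)} (hs : s ≠ 0) (i : Fin (m + 2)) (y z : α) :
    pairMass pA A' c i (i + s) y z = pairMass pA A' c (0 : Fin (m + 2)) 1 y z := by
  have h0 : Equiv.swap 1 s 0 = 0 := Equiv.swap_apply_of_ne_of_ne zero_ne_one hs.symm
  simpa [h0, add_comm] using
    pairMass_perm pA A' c ((Equiv.swap 1 s).trans (Equiv.addRight i)) 0 1 y z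

end Cyclic

/-- Independence lemma: `Aⁿ` is distributed proportionally to the product pmf
`∏ₗ p_A(aₗ)` restricted to sequences hitting `𝒜′`; given `Aⁿ`, the index `I` is uniform on
`{i : A_i ∈ 𝒜′}`, and `J = ((I+s−1) mod n) + 1` (cyclic shift by `s`, `1 ≤ s ≤ n−1`).
Then `A_I` and `A_J` are independent. -/
theorem independence_lemma {α : Type*} [Fintype α] [DecidableEq α]
    (pA : α → ℝ)
    (A' : Finset α)
    (n : ℕ) (hn : 2 ≤ n) (s : ℕ) (hs1 : 1 ≤ s) (hs2 : s ≤ n - 1)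
    (c : ℝ)
    (hc : c = ∑ a ∈ Finset.univ.filter (fun a : Fin n → α => ∃ k, a k ∈ A'), ∏ l, pA (a l))
    (hcpos : 0 < c)
    (μ : (Fin n → α) × Fin n → ℝ)
    (hμ : ∀ p : (Fin n → α) × Fin n,
      μ p = if p.1 p.2 ∈ A'
        then (∏ l, pA (p.1 l)) / (c * ((Finset.univ.filter (fun k => p.1 k ∈ A')).card : ℝ))
        else 0)
    (J : (Fin n → α) × Fin n → Fin n)
    (hJ : ∀ p : (Fin n → α) × Fin n, J p = ⟨(p.2.val + s) % n, Nat.mod_lt _ (by omega)⟩) :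
    ∀ y z : α,
      pr μ (fun p => (p.1 p.2, p.1 (J p))) (y, z)
        = pr μ (fun p => p.1 p.2) y * pr μ (fun p => p.1 (J p)) z := by
  obtain ⟨m, rfl⟩ : ∃ m, n = m + 2 := ⟨n - 2, by omega⟩
  set s' : Fin (m + 2) := ⟨s, by omega⟩
  have hs' : s' ≠ 0 := Fin.ne_of_val_ne (by simp only [s', Fin.val_zero]; omega)
  obtain rfl : μ = hitLaw pA A' c := funext hμ
  obtain rfl : J = fun p => p.2 + s' := funext fun p => by
    rw [hJ]
    ext
    simp [Fin.val_add, s']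
  have hmass : ∑ p : (Fin (m + 2) → α) × Fin (m + 2), hitLaw pA A' c p = 1 := by
    rw [sum_hitLaw, div_eq_one_iff_eq hcpos.ne']
    convert hc.symm
  refine pr_pair_eq_mul_of_eq_mul _ _ _ hmass (fun y => (m + 2) * if y ∈ A' then pA y else 0)
    (fun z => pA z * ∑ b : Fin m → α, (∏ l, pA (b l)) /
      (c * (1 + (if z ∈ A' then 1 else 0) + hitCount A' b : ℕ))) fun y z => ?_
  rw [pr_hitLaw_pair pA A' c (· + s')]
  simp only [pairMass_add_eq_zero_one pA A' c hs', pairMass_zero_one, sum_const, card_univ,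
    Fintype.card_fin, nsmul_eq_mul]
  by_cases hy : y ∈ A'
  · simp only [hy, if_true]
    push_cast
    ring
  · simp [hy]
end
end

section
/- For the scalar Gaussian channel Y = X + W₁, Z = X + W₂ with W₁ ~ N(0,1), W₂ ~ N(0,N), N > 1, and input Xⁿ satisfying (1/n)h(Yⁿ) ≥ (1/2)log(2πe(1+αP)) for some α ∈ [0,1], the entropy power inequality implies (1/n)h(Zⁿ) ≥ (1/2)log(2πe(N+αP)), where Zⁿ = Yⁿ + W̃₂ⁿ with W̃₂ ~ N(0, N−1) independent of Yⁿ. -/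
/-! Entropy powers `2 ^ ((2/n) h)` add under the entropy power inequality, and the entropy power
of a Gaussian of variance `σ²` is `2πe σ²`; so the bound `2πe (1 + αP)` on the entropy power of
`Yⁿ` and the value `2πe (N - 1)` for `W̃₂ⁿ` add up to the bound `2πe (N + αP)` for `Zⁿ`. -/

open Real

theorem logb_add_le_of_rpow_add_le {b A D x y w : ℝ} (hb : 1 < b) (hA : 0 < A) (hD : 0 < D)
    (hy : logb b A ≤ y) (hw : logb b D ≤ w) (h : b ^ y + b ^ w ≤ b ^ x) :
    logb b (A + D) ≤ x := by
  have hAy : A ≤ b ^ y := (logb_le_iff_le_rpow hb hA).1 hy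
  have hDw : D ≤ b ^ w := (logb_le_iff_le_rpow hb hD).1 hw
  exact (logb_le_iff_le_rpow hb (add_pos hA hD)).2 (by linarith)

theorem stmt11_general (n : ℕ) (hn : 0 < n) (N P α hY hZ hW : ℝ)
    (hN : 1 < N) (hP : 0 ≤ P) (hα0 : 0 ≤ α)
    (hhY : (1 / n) * hY ≥ (1 / 2) * Real.logb 2 (2 * Real.pi * Real.exp 1 * (1 + α * P)))
    (hhW : hW = ((n : ℝ) / 2) * Real.logb 2 (2 * Real.pi * Real.exp 1 * (N - 1)))
    (hEPI : (2 : ℝ) ^ ((2 / (n : ℝ)) * hZ)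
        ≥ (2 : ℝ) ^ ((2 / (n : ℝ)) * hY) + (2 : ℝ) ^ ((2 / (n : ℝ)) * hW)) :
    (1 / n) * hZ ≥ (1 / 2) * Real.logb 2 (2 * Real.pi * Real.exp 1 * (N + α * P)) := by
  have hn' : (n : ℝ) ≠ 0 := by positivity
  have hαP : 0 ≤ α * P := mul_nonneg hα0 hP
  have hc : 0 < 2 * π * exp 1 := by positivity
  have hscale : ∀ h : ℝ, (2 / (n : ℝ)) * h = 2 * ((1 / n) * h) := fun h => by ring
  have hYpow : logb 2 (2 * π * exp 1 * (1 + α * P)) ≤ (2 / (n : ℝ)) * hY := by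
    rw [hscale]; linarith
  have hWpow : logb 2 (2 * π * exp 1 * (N - 1)) ≤ (2 / (n : ℝ)) * hW := by
    rw [hhW, ← mul_assoc, div_mul_div_cancel₀ hn', div_self two_ne_zero, one_mul]
  have hZpow := logb_add_le_of_rpow_add_le one_lt_two (mul_pos hc (by linarith))
    (mul_pos hc (by linarith)) hYpow hWpow hEPI
  rw [← mul_add, show 1 + α * P + (N - 1) = N + α * P by ring, hscale] at hZpow
  linarith

/-- EPI step for the scalar Gaussian channel. If `(1/n)h(Yⁿ) ≥ ½log(2πe(1+αP))`,
`h(W̃₂ⁿ) = (n/2)log(2πe(N−1))`, and the entropy power inequality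
`2^{(2/n)h(Zⁿ)} ≥ 2^{(2/n)h(Yⁿ)} + 2^{(2/n)h(W̃₂ⁿ)}` holds (with `Zⁿ = Yⁿ + W̃₂ⁿ`),
then `(1/n)h(Zⁿ) ≥ ½log(2πe(N+αP))`. -/
theorem stmt11 (n : ℕ) (hn : 0 < n) (N P α hY hZ hW : ℝ)
    (hN : 1 < N) (hP : 0 ≤ P) (hα0 : 0 ≤ α) (hα1 : α ≤ 1)
    (hhY : (1 / n) * hY ≥ (1 / 2) * Real.logb 2 (2 * Real.pi * Real.exp 1 * (1 + α * P)))
    (hhW : hW = ((n : ℝ) / 2) * Real.logb 2 (2 * Real.pi * Real.exp 1 * (N - 1)))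
    (hEPI : (2 : ℝ) ^ ((2 / (n : ℝ)) * hZ)
        ≥ (2 : ℝ) ^ ((2 / (n : ℝ)) * hY) + (2 : ℝ) ^ ((2 / (n : ℝ)) * hW)) :
    (1 / n) * hZ ≥ (1 / 2) * Real.logb 2 (2 * Real.pi * Real.exp 1 * (N + α * P)) :=
  stmt11_general n hn N P α hY hZ hW hN hP hα0 hhY hhW hEPI
end
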